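/- arXiv:2408.05053 — 3 statements merged into one kernel-verified Lean document; each statement's English description precedes it below -/
import Mathlib

section
/- For all n ≥ 6, b_3(n) ≤ ⌈n/2⌉ < n − 2 = f_3(n); that is, the odd cover number of K_n^(3) is strictly less than its Graham–Pollak partition number. -/
open Finset

/-- `e` is an edge of the complete `r`-partite `r`-graph with parts `P 0, ..., P (r-1)`:
it meets every part in exactly one vertex. -/
def IsEdge {α : Type*} [DecidableEq α] {r : ℕ} (P : Fin r → Finset α) (e : Finset α) : Prop :=
  ∀ i, (e ∩ P i).card = 1

instance {α : Type*} [DecidableEq α] {r : ℕ} (P : Fin r → Finset α) (e : Finset α) :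
    Decidable (IsEdge P e) :=
  inferInstanceAs (Decidable (∀ _, _))

/-- The family `H` of complete `r`-partite `r`-graphs (each given by `r` pairwise disjoint
parts inside `V`) is an odd cover of the complete `r`-graph on `V`: every `r`-subset of `V`
is an edge of an odd number of members. -/
def IsOddCoverOn {α : Type*} [DecidableEq α] (V : Finset α) {r m : ℕ}
    (H : Fin m → Fin r → Finset α) : Prop :=
  (∀ i j, H i j ⊆ V) ∧
  (∀ i, Pairwise (Function.onFun Disjoint (H i))) ∧
  ∀ e ⊆ V, e.card = r → Odd ((Finset.univ.filter fun i => IsEdge (H i) e)).card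

/-- `oddCoverNumber r n` is the odd cover number `b_r(n)` of `K_n^(r)`. -/
noncomputable def oddCoverNumber (r n : ℕ) : ℕ :=
  sInf {m | ∃ H : Fin m → Fin r → Finset (Fin n), IsOddCoverOn Finset.univ H}

/-- `f_r(n)`: the Graham–Pollak partition number of `K_n^(r)`: the minimum number of complete
`r`-partite `r`-graphs such that each `r`-subset is an edge of exactly one of them. -/
noncomputable def partitionNumber (r n : ℕ) : ℕ :=
  sInf {m | ∃ H : Fin m → Fin r → Finset (Fin n),
    (∀ i, Pairwise (Function.onFun Disjoint (H i))) ∧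
    ∀ e : Finset (Fin n), e.card = r → (Finset.univ.filter fun i => IsEdge (H i) e).card = 1}

/-! ### Generic helpers -/

lemma card_filter_triple {α : Type*} [DecidableEq α] {x y z : α} (p : α → Prop)
    [DecidablePred p] (hxy : x ≠ y) (hxz : x ≠ z) (hyz : y ≠ z) :
    (({x, y, z} : Finset α).filter p).card
      = (if p x then 1 else 0) + (if p y then 1 else 0) + (if p z then 1 else 0) := by
  rw [Finset.card_filter]
  rw [show ({x, y, z} : Finset α) = insert x (insert y {z}) from rfl]
  rw [Finset.sum_insert (by simp [hxy, hxz]), Finset.sum_insert (by simp [hyz]),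
    Finset.sum_singleton]
  ring

lemma card_filter_pair {α : Type*} [DecidableEq α] {x y : α} (p : α → Prop)
    [DecidablePred p] (hxy : x ≠ y) :
    (({x, y} : Finset α).filter p).card
      = (if p x then 1 else 0) + (if p y then 1 else 0) := by
  rw [Finset.card_filter]
  rw [show ({x, y} : Finset α) = insert x {y} from rfl]
  rw [Finset.sum_insert (by simp [hxy]), Finset.sum_singleton]

lemma exists_sorted_of_card_three {n : ℕ} {e : Finset (Fin n)} (he : e.card = 3) :
    ∃ x y z : Fin n, x < y ∧ y < z ∧ e = {x, y, z} := by
  obtain ⟨a, b, c, hab, hac, hbc, rfl⟩ := Finset.card_eq_three.mp he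
  have habc : ∀ u v w : Fin n, ({a,b,c} : Finset (Fin n)) = {u,v,w} ∨ True := fun _ _ _ => Or.inr trivial
  rcases lt_trichotomy a b with h1 | h1 | h1
  · rcases lt_trichotomy b c with h2 | h2 | h2
    · exact ⟨a, b, c, h1, h2, rfl⟩
    · exact absurd h2 hbc
    · rcases lt_trichotomy a c with h3 | h3 | h3
      · exact ⟨a, c, b, h3, h2, by ext u; simp; tauto⟩
      · exact absurd h3 hac
      · exact ⟨c, a, b, h3, h1, by ext u; simp; tauto⟩
  · exact absurd h1 hab
  · rcases lt_trichotomy a c with h2 | h2 | h2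
    · exact ⟨b, a, c, h1, h2, by ext u; simp; tauto⟩
    · exact absurd h2 hac
    · rcases lt_trichotomy b c with h3 | h3 | h3
      · exact ⟨b, c, a, h3, h2, by ext u; simp; tauto⟩
      · exact absurd h3 hbc
      · exact ⟨c, b, a, h3, h1, by ext u; simp; tauto⟩

lemma fin3_forall_iff (Q : Fin 3 → Prop) : (∀ i, Q i) ↔ Q 0 ∧ Q 1 ∧ Q 2 := by
  constructor
  · exact fun h => ⟨h 0, h 1, h 2⟩
  · rintro ⟨h0, h1, h2⟩ i
    fin_cases i <;> assumption

lemma ite_sum_one_iff (P Q R : Prop) [Decidable P] [Decidable Q] [Decidable R] :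
    ((if P then 1 else 0) + (if Q then 1 else 0) + (if R then 1 else 0) = 1)
      ↔ ((P ∧ ¬Q ∧ ¬R) ∨ (¬P ∧ Q ∧ ¬R) ∨ (¬P ∧ ¬Q ∧ R)) := by
  by_cases hP : P <;> by_cases hQ : Q <;> by_cases hR : R <;> simp [hP, hQ, hR]

/-! ### The partition upper bound : n-2 tripartite graphs partitioning all triples -/

def partH (n : ℕ) (i : Fin (n - 2)) : Fin 3 → Finset (Fin n) :=
  fun j => univ.filter (fun v : Fin n =>
    if j = 0 then (v : ℕ) ≤ (i : ℕ) else if j = 1 then (v : ℕ) = i + 1 else (i : ℕ) + 1 < v)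

lemma partH_works (n : ℕ) (hn : 3 ≤ n) :
    (∀ i, Pairwise (Function.onFun Disjoint (partH n i))) ∧
    ∀ e : Finset (Fin n), e.card = 3 →
      (Finset.univ.filter fun i => IsEdge (partH n i) e).card = 1 := by
  constructor
  · intro i j k hjk
    simp only [Function.onFun, partH, Finset.disjoint_left, Finset.mem_filter]
    rintro v ⟨-, hv1⟩ ⟨-, hv2⟩
    fin_cases j <;> fin_cases k <;> simp_all <;> omega
  · intro e he
    obtain ⟨x, y, z, hxy, hyz, rfl⟩ := exists_sorted_of_card_three he
    have hy1 : 1 ≤ (y : ℕ) := by omega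
    have hy2 : (y : ℕ) ≤ n - 2 := by have := z.isLt; omega
    have key : ∀ i : Fin (n - 2), IsEdge (partH n i) {x, y, z} ↔ (i : ℕ) = (y : ℕ) - 1 := by
      intro i
      have h0 : ({x,y,z} : Finset (Fin n)) ∩ (partH n i 0)
          = ({x,y,z} : Finset (Fin n)).filter (fun v : Fin n => (v : ℕ) ≤ (i : ℕ)) := by
        ext v; simp [partH]
      have h1 : ({x,y,z} : Finset (Fin n)) ∩ (partH n i 1)
          = ({x,y,z} : Finset (Fin n)).filter (fun v : Fin n => (v : ℕ) = (i : ℕ) + 1) := by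
        ext v; simp [partH]
      have h2 : ({x,y,z} : Finset (Fin n)) ∩ (partH n i 2)
          = ({x,y,z} : Finset (Fin n)).filter (fun v : Fin n => (i : ℕ) + 1 < (v : ℕ)) := by
        ext v; simp [partH]
      rw [IsEdge, fin3_forall_iff, h0, h1, h2,
          card_filter_triple _ hxy.ne (hxy.trans hyz).ne hyz.ne,
          card_filter_triple _ hxy.ne (hxy.trans hyz).ne hyz.ne,
          card_filter_triple _ hxy.ne (hxy.trans hyz).ne hyz.ne,
          ite_sum_one_iff, ite_sum_one_iff, ite_sum_one_iff]
      have hxy' : (x:ℕ) < y := hxy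
      have hyz' : (y:ℕ) < z := hyz
      have hi : (i:ℕ) < n - 2 := i.isLt
      omega
    rw [Finset.card_eq_one]
    refine ⟨⟨(y:ℕ) - 1, by omega⟩, ?_⟩
    ext i
    simp only [Finset.mem_filter, Finset.mem_univ, true_and, Finset.mem_singleton, key]
    rw [Fin.ext_iff]

/-! ### Graham–Pollak for graphs -/

/-- The linear-algebra core: if bipartite graphs `(A i, B i)` inside `S` cover every pair
of `S` exactly once, then `#S ≤ m + 1`. -/
lemma graham_pollak {n m : ℕ} (S : Finset (Fin n)) (A B : Fin m → Finset (Fin n))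
    (hA : ∀ i, A i ⊆ S) (hB : ∀ i, B i ⊆ S) (hd : ∀ i, Disjoint (A i) (B i))
    (hcov : ∀ v ∈ S, ∀ w ∈ S, v ≠ w →
      (univ.filter fun i => (v ∈ A i ∧ w ∈ B i) ∨ (v ∈ B i ∧ w ∈ A i)).card = 1) :
    S.card ≤ m + 1 := by
  by_contra hlt
  push_neg at hlt
  -- the linear map encoding the constraints
  let T := (univ \ S : Finset (Fin n))
  let f : (Fin n → ℝ) →ₗ[ℝ] (Fin m → ℝ) × ℝ × (T → ℝ) :=
    { toFun := fun x => (fun i => ∑ v ∈ A i, x v, ∑ v ∈ S, x v, fun v => x v.1)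
      map_add' := by
        intro x y
        refine Prod.ext ?_ (Prod.ext ?_ ?_) <;>
          simp [Finset.sum_add_distrib] <;> rfl
      map_smul' := by
        intro c x
        refine Prod.ext ?_ (Prod.ext ?_ ?_)
        · funext i; simp [Finset.mul_sum]
        · simp [Finset.mul_sum]
        · funext v; simp }
  -- f cannot be injective by dimension count
  have hnotinj : ¬ Function.Injective f := by
    intro hinj
    have hle := LinearMap.finrank_le_finrank_of_injective hinj
    have h1 : Module.finrank ℝ (Fin n → ℝ) = n := by
      rw [Module.finrank_pi]; simp
    have h2 : Module.finrank ℝ ((Fin m → ℝ) × ℝ × (T → ℝ)) = m + 1 + T.card := by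
      rw [Module.finrank_prod, Module.finrank_prod, Module.finrank_pi, Module.finrank_pi,
        Module.finrank_self]
      simp [Fintype.card_coe]
      ring
    have hT : T.card = n - S.card := by
      simp only [T, Finset.card_sdiff_of_subset (Finset.subset_univ S), Finset.card_univ, Fintype.card_fin]
    have hSn : S.card ≤ n := by
      simpa using Finset.card_le_card (Finset.subset_univ S)
    rw [h1, h2, hT] at hle
    omega
  -- extract a nonzero kernel vector
  have : ∃ x : Fin n → ℝ, x ≠ 0 ∧ f x = 0 := by
    by_contra hno
    push_neg at hno
    exact hnotinj ((LinearMap.ker_eq_bot (f := f)).mp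
      (LinearMap.ker_eq_bot'.mpr (fun x hx => by
        by_contra hxne
        exact (hno x hxne) hx)))
  obtain ⟨x, hxne, hx0⟩ := this
  have hA0 : ∀ i, ∑ v ∈ A i, x v = 0 := by
    intro i
    have := congrArg (fun p => p.1 i) hx0
    simpa [f] using this
  have hS0 : ∑ v ∈ S, x v = 0 := by
    have := congrArg (fun p => p.2.1) hx0
    simpa [f] using this
  have hout : ∀ v, v ∉ S → x v = 0 := by
    intro v hv
    have hvT : v ∈ T := by simp [T, hv]
    have := congrArg (fun p => p.2.2 ⟨v, hvT⟩) hx0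
    simpa [f] using this
  -- B-sums are also irrelevant; we only need the off-diagonal identity
  -- Q > 0
  have hQ : 0 < ∑ v ∈ S, (x v) ^ 2 := by
    have hex : ∃ v, x v ≠ 0 := by
      by_contra hno
      push_neg at hno
      exact hxne (funext hno)
    obtain ⟨v, hv⟩ := hex
    have hvS : v ∈ S := by
      by_contra hvS
      exact hv (hout v hvS)
    exact Finset.sum_pos' (fun i _ => sq_nonneg _) ⟨v, hvS, sq_pos_of_ne_zero hv⟩
  -- the off-diagonal sum equals -Q
  have hoff1 : ∑ p ∈ S.offDiag, x p.1 * x p.2 = -∑ v ∈ S, (x v) ^ 2 := by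
    have hsq : (∑ v ∈ S, x v) * (∑ v ∈ S, x v) = ∑ p ∈ S ×ˢ S, x p.1 * x p.2 := by
      rw [Finset.sum_mul_sum, Finset.sum_product]
    have hsplit : ∑ p ∈ S ×ˢ S, x p.1 * x p.2
        = ∑ p ∈ S.diag, x p.1 * x p.2 + ∑ p ∈ S.offDiag, x p.1 * x p.2 := by
      rw [← Finset.sum_union (Finset.disjoint_diag_offDiag S), Finset.diag_union_offDiag]
    have hdiag : ∑ p ∈ S.diag, x p.1 * x p.2 = ∑ v ∈ S, (x v) ^ 2 := by
      rw [Finset.sum_diag]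
      exact Finset.sum_congr rfl (fun v _ => (sq (x v)).symm)
    rw [hS0, zero_mul] at hsq
    rw [hsplit, hdiag] at hsq
    linarith
  -- the off-diagonal sum equals 0 via the partition
  have hoff2 : ∑ p ∈ S.offDiag, x p.1 * x p.2 = 0 := by
    have step1 : ∀ p ∈ S.offDiag, x p.1 * x p.2
        = ∑ i ∈ univ.filter (fun i => (p.1 ∈ A i ∧ p.2 ∈ B i) ∨ (p.1 ∈ B i ∧ p.2 ∈ A i)),
            x p.1 * x p.2 := by
      rintro ⟨v, w⟩ hp
      rw [Finset.mem_offDiag] at hp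
      rw [Finset.sum_const, hcov v hp.1 w hp.2.1 hp.2.2, one_smul]
    rw [Finset.sum_congr rfl step1]
    have step2 : ∑ p ∈ S.offDiag,
        ∑ i ∈ univ.filter (fun i => (p.1 ∈ A i ∧ p.2 ∈ B i) ∨ (p.1 ∈ B i ∧ p.2 ∈ A i)),
          x p.1 * x p.2
        = ∑ i : Fin m, ∑ p ∈ S.offDiag.filter
            (fun p => (p.1 ∈ A i ∧ p.2 ∈ B i) ∨ (p.1 ∈ B i ∧ p.2 ∈ A i)), x p.1 * x p.2 := by
      simp only [Finset.sum_filter]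
      exact Finset.sum_comm
    rw [step2]
    refine Finset.sum_eq_zero (fun i _ => ?_)
    have hset : S.offDiag.filter
        (fun p => (p.1 ∈ A i ∧ p.2 ∈ B i) ∨ (p.1 ∈ B i ∧ p.2 ∈ A i))
        = (A i ×ˢ B i) ∪ (B i ×ˢ A i) := by
      ext ⟨v, w⟩
      simp only [Finset.mem_filter, Finset.mem_offDiag, Finset.mem_union, Finset.mem_product]
      constructor
      · rintro ⟨-, h⟩; tauto
      · rintro (⟨h1, h2⟩ | ⟨h1, h2⟩)
        · exact ⟨⟨hA i h1, hB i h2, fun hvw => (Finset.disjoint_left.mp (hd i)) h1 (hvw ▸ h2)⟩,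
            Or.inl ⟨h1, h2⟩⟩
        · exact ⟨⟨hB i h1, hA i h2, fun hvw => (Finset.disjoint_left.mp (hd i)) h2 (hvw ▸ h1)⟩,
            Or.inr ⟨h1, h2⟩⟩
    have hdisj : Disjoint (A i ×ˢ B i) (B i ×ˢ A i) := by
      rw [Finset.disjoint_left]
      rintro ⟨v, w⟩ h1 h2
      rw [Finset.mem_product] at h1 h2
      exact (Finset.disjoint_left.mp (hd i)) h1.1 h2.1
    rw [hset, Finset.sum_union hdisj, Finset.sum_product, Finset.sum_product]
    have : ∀ (C D : Finset (Fin n)), (∑ v ∈ C, ∑ w ∈ D, x v * x w) = (∑ v ∈ C, x v) * (∑ w ∈ D, x w) := by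
      intro C D
      rw [Finset.sum_mul_sum]
    rw [this, this, hA0 i, zero_mul, mul_zero, add_zero]
  rw [hoff2] at hoff1
  linarith

lemma fin3_ne_add_one (j : Fin 3) : j ≠ j + 1 := by revert j; decide
lemma fin3_ne_add_two (j : Fin 3) : j ≠ j + 2 := by revert j; decide
lemma fin3_add_one_ne_add_two (j : Fin 3) : j + 1 ≠ j + 2 := by revert j; decide
lemma fin3_mem_cases (j k : Fin 3) : j = k ∨ j = k + 1 ∨ j = k + 2 := by revert j k; decide

/-! ### The link argument: lower bound for the 3-uniform partition number -/

lemma partition_lower {n m : ℕ} (hn : 1 ≤ n) (H : Fin m → Fin 3 → Finset (Fin n))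
    (hdisj : ∀ i, Pairwise (Function.onFun Disjoint (H i)))
    (hcov : ∀ e : Finset (Fin n), e.card = 3 →
      (Finset.univ.filter fun i => IsEdge (H i) e).card = 1) :
    n - 2 ≤ m := by
  set z0 : Fin n := ⟨0, hn⟩ with hz0
  set S : Finset (Fin n) := univ.erase z0 with hS
  -- define the bipartite link graphs
  classical
  let A : Fin m → Finset (Fin n) := fun i =>
    if h : ∃ j, z0 ∈ H i j then H i (h.choose + 1) else ∅
  let B : Fin m → Finset (Fin n) := fun i =>
    if h : ∃ j, z0 ∈ H i j then H i (h.choose + 2) else ∅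
  have hd' : ∀ i (j k : Fin 3), j ≠ k → Disjoint (H i j) (H i k) := by
    intro i j k hjk
    exact hdisj i hjk
  have key : ∀ i, ∀ v w : Fin n, v ∈ S → w ∈ S → v ≠ w →
      (((v ∈ A i ∧ w ∈ B i) ∨ (v ∈ B i ∧ w ∈ A i)) ↔ IsEdge (H i) {z0, v, w}) := by
    intro i v w hv hw hvw
    have hvz : v ≠ z0 := Finset.ne_of_mem_erase hv
    have hwz : w ≠ z0 := Finset.ne_of_mem_erase hw
    constructor
    · -- the bipartite edge gives a triple edge
      intro hcase
      have hex : ∃ j, z0 ∈ H i j := by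
        by_contra hno
        simp only [A, B, dif_neg hno, Finset.notMem_empty, and_false, false_and, or_self] at hcase
      obtain hj0 := hex.choose_spec
      set j0 := hex.choose with hj0def
      simp only [A, B, dif_pos hex] at hcase
      -- v and w are in the two other parts (in some order)
      have main : ∀ a b : Fin n, a ≠ z0 → b ≠ z0 → a ≠ b →
          a ∈ H i (j0 + 1) → b ∈ H i (j0 + 2) → IsEdge (H i) {z0, a, b} := by
        intro a b haz hbz hab ha hb
        intro j
        have hjcases : j = j0 ∨ j = j0 + 1 ∨ j = j0 + 2 := fin3_mem_cases j j0
        have hz_not1 : z0 ∉ H i (j0 + 1) :=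
          fun h => (Finset.disjoint_left.mp (hd' i j0 (j0+1) (fin3_ne_add_one j0))) hj0 h
        have hz_not2 : z0 ∉ H i (j0 + 2) :=
          fun h => (Finset.disjoint_left.mp (hd' i j0 (j0+2) (fin3_ne_add_two j0))) hj0 h
        have ha_not0 : a ∉ H i j0 :=
          fun h => (Finset.disjoint_left.mp (hd' i (j0+1) j0 (fin3_ne_add_one j0).symm)) ha h
        have ha_not2 : a ∉ H i (j0 + 2) :=
          fun h => (Finset.disjoint_left.mp (hd' i (j0+1) (j0+2) (fin3_add_one_ne_add_two j0))) ha h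
        have hb_not0 : b ∉ H i j0 :=
          fun h => (Finset.disjoint_left.mp (hd' i (j0+2) j0 (fin3_ne_add_two j0).symm)) hb h
        have hb_not1 : b ∉ H i (j0 + 1) :=
          fun h => (Finset.disjoint_left.mp (hd' i (j0+2) (j0+1) (fin3_add_one_ne_add_two j0).symm)) hb h
        rcases hjcases with rfl | rfl | rfl
        · have : ({z0, a, b} : Finset (Fin n)) ∩ H i j0 = {z0} := by
            ext u
            simp only [Finset.mem_inter, Finset.mem_insert, Finset.mem_singleton]
            constructor
            · rintro ⟨(rfl | rfl | rfl), hu⟩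
              · rfl
              · exact absurd hu ha_not0
              · exact absurd hu hb_not0
            · rintro rfl; exact ⟨Or.inl rfl, hj0⟩
          rw [this, Finset.card_singleton]
        · have : ({z0, a, b} : Finset (Fin n)) ∩ H i (j0 + 1) = {a} := by
            ext u
            simp only [Finset.mem_inter, Finset.mem_insert, Finset.mem_singleton]
            constructor
            · rintro ⟨(rfl | rfl | rfl), hu⟩
              · exact absurd hu hz_not1
              · rfl
              · exact absurd hu hb_not1
            · rintro rfl; exact ⟨Or.inr (Or.inl rfl), ha⟩
          rw [this, Finset.card_singleton]
        · have : ({z0, a, b} : Finset (Fin n)) ∩ H i (j0 + 2) = {b} := by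
            ext u
            simp only [Finset.mem_inter, Finset.mem_insert, Finset.mem_singleton]
            constructor
            · rintro ⟨(rfl | rfl | rfl), hu⟩
              · exact absurd hu hz_not2
              · exact absurd hu ha_not2
              · rfl
            · rintro rfl; exact ⟨Or.inr (Or.inr rfl), hb⟩
          rw [this, Finset.card_singleton]
      rcases hcase with ⟨hv', hw'⟩ | ⟨hv', hw'⟩
      · exact main v w hvz hwz hvw hv' hw'
      · have := main w v hwz hvz hvw.symm hw' hv'
        have hswap : ({z0, w, v} : Finset (Fin n)) = {z0, v, w} := by
          ext u; simp; tauto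
        rwa [hswap] at this
    · -- a triple edge gives a bipartite edge
      intro hedge
      -- first: z0 lies in some part
      have hex : ∃ j, z0 ∈ H i j := by
        by_contra hno
        push_neg at hno
        -- each part meets {z0,v,w} in one vertex, none contains z0, so all parts' meets ⊆ {v,w}
        have hsub : ∀ j : Fin 3, ({z0, v, w} : Finset (Fin n)) ∩ H i j ⊆ {v, w} := by
          intro j u hu
          rw [Finset.mem_inter] at hu
          rcases Finset.mem_insert.mp hu.1 with rfl | h
          · exact absurd hu.2 (hno _)
          · exact h
        have hdisj01 : Disjoint (({z0, v, w} : Finset (Fin n)) ∩ H i 0)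
            (({z0, v, w} : Finset (Fin n)) ∩ H i 1) :=
          (hd' i 0 1 (by decide)).mono (Finset.inter_subset_right) (Finset.inter_subset_right)
        have hdisj02 : Disjoint ((({z0, v, w} : Finset (Fin n)) ∩ H i 0) ∪
            (({z0, v, w} : Finset (Fin n)) ∩ H i 1)) (({z0, v, w} : Finset (Fin n)) ∩ H i 2) := by
          rw [Finset.disjoint_union_left]
          exact ⟨(hd' i 0 2 (by decide)).mono Finset.inter_subset_right Finset.inter_subset_right,
            (hd' i 1 2 (by decide)).mono Finset.inter_subset_right Finset.inter_subset_right⟩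
        have hcard : ((({z0, v, w} : Finset (Fin n)) ∩ H i 0) ∪
            (({z0, v, w} : Finset (Fin n)) ∩ H i 1) ∪
            (({z0, v, w} : Finset (Fin n)) ∩ H i 2)).card = 3 := by
          rw [Finset.card_union_of_disjoint hdisj02, Finset.card_union_of_disjoint hdisj01,
            hedge 0, hedge 1, hedge 2]
        have hsub' : (({z0, v, w} : Finset (Fin n)) ∩ H i 0) ∪
            (({z0, v, w} : Finset (Fin n)) ∩ H i 1) ∪
            (({z0, v, w} : Finset (Fin n)) ∩ H i 2) ⊆ {v, w} := by
          refine Finset.union_subset (Finset.union_subset (hsub 0) (hsub 1)) (hsub 2)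
        have := Finset.card_le_card hsub'
        rw [hcard] at this
        have : ({v, w} : Finset (Fin n)).card ≤ 2 := Finset.card_insert_le _ _ |>.trans (by simp)
        omega
      obtain hj0 := hex.choose_spec
      set j0 := hex.choose with hj0def
      simp only [A, B, dif_pos hex]
      -- {z0,v,w} ∩ H i j0 = {z0}, so v,w are spread over the other two parts
      have h1 := hedge (j0 + 1)
      have h2 := hedge (j0 + 2)
      have hz_not1 : z0 ∉ H i (j0 + 1) :=
        fun h => (Finset.disjoint_left.mp (hd' i j0 (j0+1) (fin3_ne_add_one j0))) hj0 h
      have hz_not2 : z0 ∉ H i (j0 + 2) :=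
        fun h => (Finset.disjoint_left.mp (hd' i j0 (j0+2) (fin3_ne_add_two j0))) hj0 h
      -- the intersection with part j0+1 is {v} or {w}
      have hmem1 : ∃ u, u ∈ ({v, w} : Finset (Fin n)) ∧
          ({z0, v, w} : Finset (Fin n)) ∩ H i (j0 + 1) = {u} := by
        obtain ⟨u, hu⟩ := Finset.card_eq_one.mp h1
        refine ⟨u, ?_, hu⟩
        have : u ∈ ({z0, v, w} : Finset (Fin n)) ∩ H i (j0 + 1) := by rw [hu]; simp
        rw [Finset.mem_inter] at this
        rcases Finset.mem_insert.mp this.1 with rfl | h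
        · exact absurd this.2 hz_not1
        · exact h
      have hmem2 : ∃ u, u ∈ ({v, w} : Finset (Fin n)) ∧
          ({z0, v, w} : Finset (Fin n)) ∩ H i (j0 + 2) = {u} := by
        obtain ⟨u, hu⟩ := Finset.card_eq_one.mp h2
        refine ⟨u, ?_, hu⟩
        have : u ∈ ({z0, v, w} : Finset (Fin n)) ∩ H i (j0 + 2) := by rw [hu]; simp
        rw [Finset.mem_inter] at this
        rcases Finset.mem_insert.mp this.1 with rfl | h
        · exact absurd this.2 hz_not2
        · exact h
      obtain ⟨u1, hu1mem, hu1⟩ := hmem1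
      obtain ⟨u2, hu2mem, hu2⟩ := hmem2
      have hu1in : u1 ∈ H i (j0 + 1) := by
        have : u1 ∈ ({z0, v, w} : Finset (Fin n)) ∩ H i (j0+1) := by rw [hu1]; simp
        exact (Finset.mem_inter.mp this).2
      have hu2in : u2 ∈ H i (j0 + 2) := by
        have : u2 ∈ ({z0, v, w} : Finset (Fin n)) ∩ H i (j0+2) := by rw [hu2]; simp
        exact (Finset.mem_inter.mp this).2
      have hu12 : u1 ≠ u2 := by
        rintro rfl
        exact (Finset.disjoint_left.mp (hd' i (j0+1) (j0+2) (fin3_add_one_ne_add_two j0))) hu1in hu2in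
      rw [Finset.mem_insert, Finset.mem_singleton] at hu1mem hu2mem
      rcases hu1mem with rfl | rfl <;> rcases hu2mem with rfl | rfl
      · exact absurd rfl hu12
      · exact Or.inl ⟨hu1in, hu2in⟩
      · exact Or.inr ⟨hu2in, hu1in⟩
      · exact absurd rfl hu12
  -- apply Graham–Pollak
  have hAS : ∀ i, A i ⊆ S := by
    intro i u hu
    simp only [A] at hu
    split_ifs at hu with hex
    · obtain hj0 := hex.choose_spec
      rw [hS, Finset.mem_erase]
      refine ⟨?_, Finset.mem_univ u⟩
      rintro rfl
      exact (Finset.disjoint_left.mp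
        (hd' i hex.choose (hex.choose+1) (fin3_ne_add_one _))) hj0 hu
    · exact absurd hu (Finset.notMem_empty u)
  have hBS : ∀ i, B i ⊆ S := by
    intro i u hu
    simp only [B] at hu
    split_ifs at hu with hex
    · obtain hj0 := hex.choose_spec
      rw [hS, Finset.mem_erase]
      refine ⟨?_, Finset.mem_univ u⟩
      rintro rfl
      exact (Finset.disjoint_left.mp
        (hd' i hex.choose (hex.choose+2) (fin3_ne_add_two _))) hj0 hu
    · exact absurd hu (Finset.notMem_empty u)
  have hABd : ∀ i, Disjoint (A i) (B i) := by
    intro i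
    simp only [A, B]
    split_ifs with hex
    · exact hd' i _ _ (fin3_add_one_ne_add_two _)
    · exact Finset.disjoint_empty_left _
  have hcov' : ∀ v ∈ S, ∀ w ∈ S, v ≠ w →
      (univ.filter fun i => (v ∈ A i ∧ w ∈ B i) ∨ (v ∈ B i ∧ w ∈ A i)).card = 1 := by
    intro v hv w hw hvw
    have hvz : v ≠ z0 := Finset.ne_of_mem_erase hv
    have hwz : w ≠ z0 := Finset.ne_of_mem_erase hw
    have hecard : ({z0, v, w} : Finset (Fin n)).card = 3 := by
      rw [Finset.card_insert_of_notMem (by simp [Ne.symm hvz, Ne.symm hwz]),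
        Finset.card_insert_of_notMem (by simp [hvw]), Finset.card_singleton]
    have := hcov {z0, v, w} hecard
    rw [← this]
    congr 1
    ext i
    simp only [Finset.mem_filter, Finset.mem_univ, true_and]
    exact key i v w hv hw hvw
  have hgp := graham_pollak S A B hAS hBS hABd hcov'
  have hScard : S.card = n - 1 := by
    rw [hS, Finset.card_erase_of_mem (Finset.mem_univ _), Finset.card_univ, Fintype.card_fin]
  omega

/-! ### The odd cover construction -/



/-- `b` lies strictly inside the circular arc `(a, a+m)` of `ℤ/2m`. -/
def Sg (m a b : ℕ) : Prop := (a < b ∧ b - a < m) ∨ (b < a ∧ m < a - b)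

/-- `b` lies strictly inside the circular arc `(a+m, a+2m)` of `ℤ/2m`. -/
def Sg' (m a b : ℕ) : Prop := (b < a ∧ a - b < m) ∨ (a < b ∧ m < b - a)

/-- the diameter through `a` strictly separates `b` and `c`. -/
def SepP (m a b c : ℕ) : Prop := (Sg m a b ∧ Sg' m a c) ∨ (Sg m a c ∧ Sg' m a b)

instance (m a b : ℕ) : Decidable (Sg m a b) := by unfold Sg; infer_instance
instance (m a b : ℕ) : Decidable (Sg' m a b) := by unfold Sg'; infer_instance
instance (m a b c : ℕ) : Decidable (SepP m a b c) := by unfold SepP; infer_instance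

/-- the arithmetic condition for the triple `{x,y,z}` to be an edge of the `k`-th graph. -/
def CovP (m k x y z : ℕ) : Prop :=
  ((k = x ∨ k + m = x) ∧ SepP m x y z) ∨ ((k = y ∨ k + m = y) ∧ SepP m y x z) ∨
    ((k = z ∨ k + m = z) ∧ SepP m z x y)

instance (m k x y z : ℕ) : Decidable (CovP m k x y z) := by
  unfold CovP; infer_instance

set_option maxHeartbeats 2000000 in
/-- The key parity lemma: each triple is covered by an odd number of the circular graphs. -/
lemma covP_count_odd (m : ℕ) (hm : 0 < m) {x y z : ℕ} (hxy : x < y) (hyz : y < z)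
    (hz : z < 2 * m) :
    Odd ((Finset.univ.filter fun k : Fin m => CovP m k.val x y z).card) := by
  by_cases hc2 : z = x + m
  · -- x,z antipodal: the unique covering graph is the one through y
    rcases lt_or_ge y m with hym | hym
    · have : (Finset.univ.filter fun k : Fin m => CovP m k.val x y z) = {⟨y, hym⟩} := by
        ext k
        simp only [Finset.mem_filter, Finset.mem_univ, true_and, Finset.mem_singleton,
          Fin.ext_iff, Fin.val_mk]
        have hk := k.isLt
        unfold CovP SepP Sg Sg'
        omega
      rw [this, Finset.card_singleton]
      exact odd_one
    · have : (Finset.univ.filter fun k : Fin m => CovP m k.val x y z) = {⟨y - m, by omega⟩} := by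
        ext k
        simp only [Finset.mem_filter, Finset.mem_univ, true_and, Finset.mem_singleton,
          Fin.ext_iff, Fin.val_mk]
        have hk := k.isLt
        unfold CovP SepP Sg Sg'
        omega
      rw [this, Finset.card_singleton]
      exact odd_one
  by_cases hc1 : y = x + m
  · -- x,y antipodal: the unique covering graph is the one through z, and z ≥ m
    have : (Finset.univ.filter fun k : Fin m => CovP m k.val x y z) = {⟨z - m, by omega⟩} := by
      ext k
      simp only [Finset.mem_filter, Finset.mem_univ, true_and, Finset.mem_singleton,
        Fin.ext_iff, Fin.val_mk]
      have hk := k.isLt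
      unfold CovP SepP Sg Sg'
      omega
    rw [this, Finset.card_singleton]
    exact odd_one
  by_cases hc3 : z = y + m
  · -- y,z antipodal: the unique covering graph is the one through x, and x < m
    have : (Finset.univ.filter fun k : Fin m => CovP m k.val x y z) = {⟨x, by omega⟩} := by
      ext k
      simp only [Finset.mem_filter, Finset.mem_univ, true_and, Finset.mem_singleton,
        Fin.ext_iff, Fin.val_mk]
      have hk := k.isLt
      unfold CovP SepP Sg Sg'
      omega
    rw [this, Finset.card_singleton]
    exact odd_one
  · -- all three diameters are distinct
    have hsplit : (Finset.univ.filter fun k : Fin m => CovP m k.val x y z)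
        = ((Finset.univ.filter fun k : Fin m => (k.val = x ∨ k.val + m = x) ∧ SepP m x y z) ∪
            (Finset.univ.filter fun k : Fin m => (k.val = y ∨ k.val + m = y) ∧ SepP m y x z)) ∪
          (Finset.univ.filter fun k : Fin m => (k.val = z ∨ k.val + m = z) ∧ SepP m z x y) := by
      ext k
      simp only [Finset.mem_union, Finset.mem_filter, Finset.mem_univ, true_and]
      unfold CovP
      tauto
    have hcard1 : ∀ w : ℕ, w < 2 * m → ∀ P : Prop, ∀ _ : Decidable P,
        (Finset.univ.filter fun k : Fin m => (k.val = w ∨ k.val + m = w) ∧ P).card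
          = if P then 1 else 0 := by
      intro w hw P hP
      split_ifs with hPP
      · rcases lt_or_ge w m with hwm | hwm
        · rw [show (Finset.univ.filter fun k : Fin m => (k.val = w ∨ k.val + m = w) ∧ P)
              = {⟨w, hwm⟩} by
            ext k
            simp only [Finset.mem_filter, Finset.mem_univ, true_and, Finset.mem_singleton,
              Fin.ext_iff, Fin.val_mk]
            have hk := k.isLt
            constructor
            · rintro ⟨h, -⟩; omega
            · intro h; exact ⟨by omega, hPP⟩]
          exact Finset.card_singleton _
        · rw [show (Finset.univ.filter fun k : Fin m => (k.val = w ∨ k.val + m = w) ∧ P)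
              = {⟨w - m, by omega⟩} by
            ext k
            simp only [Finset.mem_filter, Finset.mem_univ, true_and, Finset.mem_singleton,
              Fin.ext_iff, Fin.val_mk]
            have hk := k.isLt
            constructor
            · rintro ⟨h, -⟩; omega
            · intro h; exact ⟨by omega, hPP⟩]
          exact Finset.card_singleton _
      · rw [Finset.filter_false_of_mem (fun k _ => by tauto), Finset.card_empty]
    have hd1 : Disjoint (Finset.univ.filter fun k : Fin m => (k.val = x ∨ k.val + m = x) ∧ SepP m x y z)
        (Finset.univ.filter fun k : Fin m => (k.val = y ∨ k.val + m = y) ∧ SepP m y x z) := by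
      rw [Finset.disjoint_left]
      intro k h1 h2
      simp only [Finset.mem_filter] at h1 h2
      have hk := k.isLt
      omega
    have hd2 : Disjoint ((Finset.univ.filter fun k : Fin m => (k.val = x ∨ k.val + m = x) ∧ SepP m x y z) ∪
          (Finset.univ.filter fun k : Fin m => (k.val = y ∨ k.val + m = y) ∧ SepP m y x z))
        (Finset.univ.filter fun k : Fin m => (k.val = z ∨ k.val + m = z) ∧ SepP m z x y) := by
      rw [Finset.disjoint_union_left, Finset.disjoint_left, Finset.disjoint_left]
      constructor <;>
      · intro k h1 h2
        simp only [Finset.mem_filter] at h1 h2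
        have hk := k.isLt
        omega
    rw [hsplit, Finset.card_union_of_disjoint hd2, Finset.card_union_of_disjoint hd1,
      hcard1 x (by omega) _ inferInstance, hcard1 y (by omega) _ inferInstance,
      hcard1 z (by omega) _ inferInstance]
    -- tournament parity: an odd number of the three separations hold
    have hparity : (SepP m x y z ∧ SepP m y x z ∧ SepP m z x y) ∨
        (SepP m x y z ∧ ¬SepP m y x z ∧ ¬SepP m z x y) ∨
        (¬SepP m x y z ∧ SepP m y x z ∧ ¬SepP m z x y) ∨
        (¬SepP m x y z ∧ ¬SepP m y x z ∧ SepP m z x y) := by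
      unfold SepP Sg Sg'
      omega
    rcases hparity with ⟨h1, h2, h3⟩ | ⟨h1, h2, h3⟩ | ⟨h1, h2, h3⟩ | ⟨h1, h2, h3⟩ <;>
      simp [h1, h2, h3] <;> decide


/-- The circular construction: the `k`-th graph has parts
`B = {k, k+m}`, `A = (k, k+m)`, `C = (k+m, k+2m)` (arcs of `ℤ/2m`, restricted to `Fin n`). -/
def oddH (n m : ℕ) (k : Fin m) : Fin 3 → Finset (Fin n) :=
  fun j => univ.filter (fun v : Fin n =>
    if j = 0 then ((v : ℕ) = k ∨ (v : ℕ) = k + m)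
    else if j = 1 then ((k : ℕ) < v ∧ (v : ℕ) < k + m)
    else ((v : ℕ) < k ∨ (k : ℕ) + m < v))

lemma oddH_disj (n m : ℕ) (k : Fin m) :
    Pairwise (Function.onFun Disjoint (oddH n m k)) := by
  intro a b hab
  simp only [Function.onFun, oddH, Finset.disjoint_left, Finset.mem_filter]
  rintro v ⟨-, hv1⟩ ⟨-, hv2⟩
  fin_cases a <;> fin_cases b <;> simp_all <;> omega

set_option maxHeartbeats 2000000 in
lemma oddH_edge_iff (n m : ℕ) (hnm : n ≤ 2 * m) {x y z : Fin n} (hxy : x < y) (hyz : y < z)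
    (k : Fin m) :
    IsEdge (oddH n m k) ({x, y, z} : Finset (Fin n))
      ↔ CovP m k.val x.val y.val z.val := by
  have hxy' : (x:ℕ) < y := hxy
  have hyz' : (y:ℕ) < z := hyz
  have hz : (z:ℕ) < 2 * m := lt_of_lt_of_le z.isLt hnm
  have hk : (k:ℕ) < m := k.isLt
  have h0 : ({x,y,z} : Finset (Fin n)) ∩ (oddH n m k 0)
      = ({x,y,z} : Finset (Fin n)).filter
        (fun v : Fin n => (v : ℕ) = k ∨ (v : ℕ) = (k:ℕ) + m) := by
    ext v; simp [oddH]
  have h1 : ({x,y,z} : Finset (Fin n)) ∩ (oddH n m k 1)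
      = ({x,y,z} : Finset (Fin n)).filter
        (fun v : Fin n => (k : ℕ) < v ∧ (v : ℕ) < (k:ℕ) + m) := by
    ext v; simp [oddH]
  have h2 : ({x,y,z} : Finset (Fin n)) ∩ (oddH n m k 2)
      = ({x,y,z} : Finset (Fin n)).filter
        (fun v : Fin n => (v : ℕ) < k ∨ (k : ℕ) + m < v) := by
    ext v; simp [oddH]
  have hxyne : x ≠ y := hxy.ne
  have hxzne : x ≠ z := (hxy.trans hyz).ne
  have hyzne : y ≠ z := hyz.ne
  rw [IsEdge, fin3_forall_iff, h0, h1, h2,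
      card_filter_triple _ hxyne hxzne hyzne,
      card_filter_triple _ hxyne hxzne hyzne,
      card_filter_triple _ hxyne hxzne hyzne,
      ite_sum_one_iff, ite_sum_one_iff, ite_sum_one_iff]
  unfold CovP SepP Sg Sg'
  omega

lemma oddH_count_odd (n m : ℕ) (hm : 0 < m) (hnm : n ≤ 2 * m) {x y z : Fin n}
    (hxy : x < y) (hyz : y < z) :
    Odd ((Finset.univ.filter fun k : Fin m => IsEdge (oddH n m k) ({x,y,z} : Finset (Fin n))).card) := by
  have hfilt : (Finset.univ.filter fun k : Fin m => IsEdge (oddH n m k) ({x,y,z} : Finset (Fin n)))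
      = (Finset.univ.filter fun k : Fin m => CovP m k.val x.val y.val z.val) := by
    refine Finset.filter_congr (fun k _ => ?_)
    exact oddH_edge_iff n m hnm hxy hyz k
  rw [hfilt]
  have hxy' : (x:ℕ) < y := hxy
  have hyz' : (y:ℕ) < z := hyz
  have hz : (z:ℕ) < 2 * m := lt_of_lt_of_le z.isLt hnm
  exact covP_count_odd m hm hxy' hyz' hz

/-! ### Main theorem -/

/-- For all `n ≥ 6`, `b_3(n) ≤ ⌈n/2⌉ < n - 2 = f_3(n)`. -/
theorem stmt17 (n : ℕ) (hn : 6 ≤ n) :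
    oddCoverNumber 3 n ≤ (n + 1) / 2 ∧ (n + 1) / 2 < n - 2 ∧ partitionNumber 3 n = n - 2 := by
  have hmid : (n + 1) / 2 < n - 2 := by omega
  refine ⟨?_, hmid, ?_⟩
  · -- odd cover upper bound
    set m := (n + 1) / 2 with hm
    have hm0 : 0 < m := by omega
    have hnm : n ≤ 2 * m := by omega
    refine Nat.sInf_le ⟨oddH n m, fun i j => Finset.filter_subset _ _, oddH_disj n m, ?_⟩
    intro e _ he
    obtain ⟨x, y, z, hxy, hyz, rfl⟩ := exists_sorted_of_card_three he
    exact oddH_count_odd n m hm0 hnm hxy hyz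
  · -- partition number
    obtain ⟨hdisjP, hcovP⟩ := partH_works n (by omega)
    have hupper : partitionNumber 3 n ≤ n - 2 :=
      Nat.sInf_le ⟨partH n, hdisjP, hcovP⟩
    have hne : {m | ∃ H : Fin m → Fin 3 → Finset (Fin n),
        (∀ i, Pairwise (Function.onFun Disjoint (H i))) ∧
        ∀ e : Finset (Fin n), e.card = 3 →
          (Finset.univ.filter fun i => IsEdge (H i) e).card = 1}.Nonempty :=
      ⟨n - 2, partH n, hdisjP, hcovP⟩
    have hmem := Nat.sInf_mem hne
    obtain ⟨H, hd, hc⟩ := hmem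
    have hlower := partition_lower (by omega) H hd hc
    exact le_antisymm hupper hlower
end

section
/- Let k ≥ 2 and identify the vertices of K_{2k}^{(3)} with Z_{2k}. For a 3-set A = {0, b, c} with 0 < b < k < c < 2k, c ≠ k, and c ≠ b + k (no two points opposite), A is an edge of exactly three of the hypergraphs H_0, ..., H_{k−1} if k < c < k + b, and exactly one of them otherwise. -/
/-!
Represent the vertices by the naturals below `2k`. For `i < k`, a vertex `x` lies in the first
part of `H_i` iff `x ∈ {i, i + k}`, in the second iff `i < x < i + k`, and in the third
otherwise. Hence `0` is in the first part of `H_i` iff `i = 0` and in the third otherwise, `b`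
is in the first or second part and `c` in the first or third. So `{0, b, c}` is an edge of
`H_0`, and of `H_i`, `i ≠ 0`, iff one of `b`, `c` is `i` or `i + k` and the other lies in
`(i, i + k)`: this happens for `i = b` and for `i = c - k`, both exactly when `c < b + k`.
-/

open Finset

/-- The circular construction `H_i` on `ZMod (2k)`: parts `{i, i+k}`,
`{i+1, ..., i+k-1}` and `{i+k+1, ..., i-1}`. -/
def circPart (k : ℕ) (i : ZMod (2 * k)) : Fin 3 → Finset (ZMod (2 * k)) :=
  ![{i, i + (k : ZMod (2 * k))},
    (Finset.Ico 1 k).image fun j : ℕ => i + (j : ZMod (2 * k)),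
    (Finset.Ico (k + 1) (2 * k)).image fun j : ℕ => i + (j : ZMod (2 * k))]

theorem ZMod.natCast_eq_natCast_iff_of_lt {n x y : ℕ} (hx : x < n) (hy : y < 2 * n) :
    (y : ZMod n) = x ↔ y = x ∨ y = x + n := by
  rw [ZMod.natCast_eq_natCast_iff', Nat.mod_eq_of_lt hx]
  rcases Nat.lt_or_ge y n with hyn | hyn
  · rw [Nat.mod_eq_of_lt hyn]
    omega
  · rw [Nat.mod_eq_sub_mod hyn, Nat.mod_eq_of_lt (by omega)]
    omega

theorem ZMod.natCast_mem_pair_iff {n i x : ℕ} (hi : i < n) (hx : x < 2 * n) :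
    (x : ZMod (2 * n)) ∈ ({(i : ZMod (2 * n)), (i : ZMod (2 * n)) + n} : Finset (ZMod (2 * n))) ↔
      x = i ∨ x = i + n := by
  rw [Finset.mem_insert, Finset.mem_singleton, ← Nat.cast_add,
    ZMod.natCast_eq_natCast_iff_of_lt (by omega) (by omega),
    ZMod.natCast_eq_natCast_iff_of_lt (by omega) (by omega)]
  omega

theorem ZMod.natCast_mem_image_add_Ico_iff {n i x a b : ℕ} (hi : i < n) (hx : x < n)
    (hb : b ≤ n) :
    (x : ZMod n) ∈ (Finset.Ico a b).image (fun j : ℕ => (i : ZMod n) + j) ↔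
      (i ≤ x ∧ a ≤ x - i ∧ x - i < b) ∨ (x < i ∧ a ≤ x + n - i ∧ x + n - i < b) := by
  simp only [Finset.mem_image, Finset.mem_Ico, ← Nat.cast_add]
  constructor
  · rintro ⟨j, hj, hij⟩
    rw [ZMod.natCast_eq_natCast_iff_of_lt hx (by omega)] at hij
    omega
  · rintro (⟨hix, hax, hxb⟩ | ⟨hxi, hax, hxb⟩)
    · exact ⟨x - i, ⟨hax, hxb⟩, by rw [Nat.add_sub_cancel' hix]⟩
    · refine ⟨x + n - i, ⟨hax, hxb⟩, ?_⟩
      rw [Nat.add_sub_cancel' (by omega), Nat.cast_add, ZMod.natCast_self, add_zero]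

theorem Finset.card_triple_inter {α : Type*} [DecidableEq α] {x y z : α} (hxy : x ≠ y)
    (hxz : x ≠ z) (hyz : y ≠ z) (s : Finset α) :
    ({x, y, z} ∩ s).card =
      (if x ∈ s then 1 else 0) + (if y ∈ s then 1 else 0) + (if z ∈ s then 1 else 0) := by
  rw [← Finset.filter_mem_eq_inter, Finset.card_filter, Finset.sum_insert (by simp [hxy, hxz]),
    Finset.sum_insert (by simp [hyz]), Finset.sum_singleton, add_assoc]

theorem isEdge_fin_three_iff {α : Type*} [DecidableEq α] (P : Fin 3 → Finset α)
    (e : Finset α) :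
    IsEdge P e ↔ (e ∩ P 0).card = 1 ∧ (e ∩ P 1).card = 1 ∧ (e ∩ P 2).card = 1 :=
  ⟨fun h => ⟨h 0, h 1, h 2⟩, fun ⟨h0, h1, h2⟩ i => by fin_cases i <;> assumption⟩

section CircularEdges

variable {k b c i x : ℕ}

theorem natCast_mem_circPart_zero_iff (hi : i < k) (hx : x < 2 * k) :
    (x : ZMod (2 * k)) ∈ circPart k i 0 ↔ x = i ∨ x = i + k :=
  ZMod.natCast_mem_pair_iff hi hx

theorem natCast_mem_circPart_one_iff (hi : i < k) (hx : x < 2 * k) :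
    (x : ZMod (2 * k)) ∈ circPart k i 1 ↔ i < x ∧ x < i + k := by
  rw [circPart, Matrix.cons_val_one, Matrix.cons_val_zero,
    ZMod.natCast_mem_image_add_Ico_iff (by omega) hx (by omega)]
  omega

theorem natCast_mem_circPart_two_iff (hi : i < k) (hx : x < 2 * k) :
    (x : ZMod (2 * k)) ∈ circPart k i 2 ↔ x < i ∨ i + k < x := by
  rw [circPart, Matrix.cons_val_two, Matrix.tail_cons, Matrix.head_cons,
    ZMod.natCast_mem_image_add_Ico_iff (by omega) hx le_rfl]
  omega

theorem isEdge_circPart_iff (hi : i < k) (hb0 : 0 < b) (hbk : b < k) (hkc : k < c)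
    (hc : c < 2 * k) :
    IsEdge (circPart k (i : ZMod (2 * k)))
        {(0 : ZMod (2 * k)), (b : ZMod (2 * k)), (c : ZMod (2 * k))} ↔
      i = 0 ∨ ((i = b ∨ i + k = c) ∧ c < b + k) := by
  have hne : ∀ {x y : ℕ}, x < 2 * k → y < 2 * k → x ≠ y → (x : ZMod (2 * k)) ≠ y :=
    fun hx hy hxy h =>
      hxy (((ZMod.natCast_eq_natCast_iff_of_lt hy (by omega)).1 h).resolve_right (by omega))
  rw [← Nat.cast_zero, isEdge_fin_three_iff]
  simp (disch := omega) only [Finset.card_triple_inter (hne (by omega) (by omega) hb0.ne)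
      (hne (by omega) hc (by omega)) (hne (by omega) hc (by omega)),
    natCast_mem_circPart_zero_iff, natCast_mem_circPart_one_iff, natCast_mem_circPart_two_iff]
  split_ifs <;> omega

theorem filter_isEdge_circPart_eq (hb0 : 0 < b) (hbk : b < k) (hkc : k < c) (hc : c < 2 * k) :
    (Finset.range k).filter (fun i : ℕ => IsEdge (circPart k (i : ZMod (2 * k)))
        {(0 : ZMod (2 * k)), (b : ZMod (2 * k)), (c : ZMod (2 * k))}) =
      if c < b + k then {0, b, c - k} else {0} := by
  ext i
  rw [Finset.mem_filter, Finset.mem_range]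
  split_ifs <;>
  · simp only [Finset.mem_insert, Finset.mem_singleton]
    constructor
    · rintro ⟨hi, hedge⟩
      have := (isEdge_circPart_iff hi hb0 hbk hkc hc).1 hedge
      omega
    · intro h
      have hi : i < k := by omega
      exact ⟨hi, (isEdge_circPart_iff hi hb0 hbk hkc hc).2 (by omega)⟩

end CircularEdges

theorem stmt18_general (k : ℕ) (b c : ℕ)
    (hb0 : 0 < b) (hbk : b < k) (hkc : k < c) (hc : c < 2 * k) :
    (((Finset.range k).filter fun i : ℕ =>
        IsEdge (circPart k (i : ZMod (2 * k)))
          {(0 : ZMod (2 * k)), (b : ZMod (2 * k)), (c : ZMod (2 * k))}).card) =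
      if k < c ∧ c < k + b then 3 else 1 := by
  rw [filter_isEdge_circPart_eq hb0 hbk hkc hc]
  by_cases hcb : c < b + k
  · rw [if_pos hcb, if_pos ⟨hkc, by omega⟩]
    exact Finset.card_eq_three.2 ⟨0, b, c - k, by omega, by omega, by omega, rfl⟩
  · rw [if_neg hcb, if_neg (by omega), Finset.card_singleton]

/-- A 3-set `{0, b, c}` with `0 < b < k < c < 2k` and no opposite pair is an edge of exactly
three of the circular hypergraphs `H_0, …, H_{k-1}` if `k < c < k + b`, and exactly one
otherwise. -/
theorem stmt18 (k : ℕ) (hk : 2 ≤ k) (b c : ℕ)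
    (hb0 : 0 < b) (hbk : b < k) (hkc : k < c) (hc : c < 2 * k) (hop : c ≠ b + k) :
    (((Finset.range k).filter fun i : ℕ =>
        IsEdge (circPart k (i : ZMod (2 * k)))
          {(0 : ZMod (2 * k)), (b : ZMod (2 * k)), (c : ZMod (2 * k))}).card) =
      if k < c ∧ c < k + b then 3 else 1 :=
  stmt18_general k b c hb0 hbk hkc hc
end

section
/- For r even, b_r(n) ≤ 2·b_r(⌈n/2⌉) + 2·b_{r−1}(⌈n/2⌉) + Σ_{t=2}^{r−2} b_t(⌈n/2⌉)·b_{r−t}(⌈n/2⌉), where b_r(n) denotes the odd cover number of K_n^(r) (with the convention that the products handle 4-sets split between the two halves via products of odd covers of lower uniformity). -/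
open Finset

variable {α : Type*} [DecidableEq α]

noncomputable def cnt {r m : ℕ} (H : Fin m → Fin r → Finset α) (e : Finset α) : ℕ :=
  (Finset.univ.filter fun i => IsEdge (H i) e).card

def Fits {r m : ℕ} (H : Fin m → Fin r → Finset α) (C : Finset α → Prop) : Prop :=
  (∀ i, Pairwise (Function.onFun Disjoint (H i))) ∧
  ∀ e : Finset α, e.card = r → (Odd (cnt H e) ↔ C e)

lemma cnt_append {r m1 m2 : ℕ} (H1 : Fin m1 → Fin r → Finset α)
    (H2 : Fin m2 → Fin r → Finset α) (e : Finset α) :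
    cnt (Fin.append H1 H2) e = cnt H1 e + cnt H2 e := by
  classical
  simp only [cnt, Finset.card_filter]
  rw [Fin.sum_univ_add]
  simp [Fin.append_left, Fin.append_right]

lemma edge_biUnion {r : ℕ} {P : Fin r → Finset α} (hd : Pairwise (Function.onFun Disjoint P))
    {e : Finset α} (he : IsEdge P e) :
    (Finset.univ.biUnion fun j => e ∩ P j) ⊆ e ∧
      (Finset.univ.biUnion fun j => e ∩ P j).card = r := by
  constructor
  · intro x hx; simp only [Finset.mem_biUnion, Finset.mem_inter] at hx; exact hx.choose_spec.2.1
  · rw [Finset.card_biUnion]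
    · rw [Finset.sum_congr rfl (fun u _ => he u)]
      simp
    · intro i _ j _ hij
      exact Finset.disjoint_of_subset_left (Finset.inter_subset_right)
        (Finset.disjoint_of_subset_right (Finset.inter_subset_right) (hd hij))

lemma edge_card_le {r : ℕ} {P : Fin r → Finset α} (hd : Pairwise (Function.onFun Disjoint P))
    {e : Finset α} (he : IsEdge P e) : r ≤ e.card := by
  obtain ⟨h1, h2⟩ := edge_biUnion hd he
  calc r = _ := h2.symm
  _ ≤ e.card := Finset.card_le_card h1

lemma edge_subset {r : ℕ} {P : Fin r → Finset α} (hd : Pairwise (Function.onFun Disjoint P))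
    {e : Finset α} (he : IsEdge P e) (hcard : e.card = r) {S : Finset α}
    (hP : ∀ j, P j ⊆ S) : e ⊆ S := by
  obtain ⟨h1, h2⟩ := edge_biUnion hd he
  have : (Finset.univ.biUnion fun j => e ∩ P j) = e :=
    Finset.eq_of_subset_of_card_le h1 (by omega)
  intro x hx
  rw [← this] at hx
  simp only [Finset.mem_biUnion, Finset.mem_inter] at hx
  obtain ⟨j, _, _, hxP⟩ := hx
  exact hP j hxP
lemma singleton_edge [LinearOrder α] {s : ℕ} {e f : Finset α} (he : e.card = s) :
    (IsEdge (fun j => {(e.orderIsoOfFin he j : α)}) f) ↔ e ⊆ f := by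
  simp only [IsEdge, Finset.inter_singleton]
  constructor
  · intro h x hx
    obtain ⟨j, hj⟩ := (e.orderIsoOfFin he).surjective ⟨x, hx⟩
    have := h j
    rw [hj] at this
    by_contra hxf
    simp [hxf] at this
  · intro h j
    have : (e.orderEmbOfFin he j : α) ∈ f := h (e.orderIsoOfFin he j).2
    simp [this]

lemma exists_oddCover (s k : ℕ) :
    ∃ m : ℕ, ∃ H : Fin m → Fin s → Finset (Fin k), IsOddCoverOn Finset.univ H := by
  classical
  set P := (Finset.univ : Finset (Fin k)).powersetCard s with hP
  have hcard : ∀ e ∈ P, Finset.card e = s := by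
    intro e he; rw [hP, Finset.mem_powersetCard] at he; exact he.2
  refine ⟨P.card, fun i j => {(((P.equivFin.symm i : P) : Finset (Fin k)).orderIsoOfFin
    (hcard _ (P.equivFin.symm i).2) j : Fin k)}, ?_, ?_, ?_⟩
  · intro i j; exact Finset.subset_univ _
  · intro i j j' hjj'
    simp only [Function.onFun, Finset.disjoint_singleton_left, Finset.mem_singleton]
    intro h
    exact hjj' ((((P.equivFin.symm i : P) : Finset (Fin k)).orderIsoOfFin _).injective
      (Subtype.ext h))
  · intro e _ he
    have heP : e ∈ P := by rw [hP, Finset.mem_powersetCard]; exact ⟨Finset.subset_univ _, he⟩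
    have : (Finset.univ.filter fun i =>
        IsEdge (fun j => ({(((P.equivFin.symm i : P) : Finset (Fin k)).orderIsoOfFin
          (hcard _ (P.equivFin.symm i).2) j : Fin k)} : Finset (Fin k))) e)
        = {P.equivFin ⟨e, heP⟩} := by
      ext i
      simp only [Finset.mem_filter, Finset.mem_univ, true_and, Finset.mem_singleton]
      rw [singleton_edge]
      constructor
      · intro h
        have : ((P.equivFin.symm i : P) : Finset (Fin k)) = e :=
          Finset.eq_of_subset_of_card_le h (by rw [he, hcard _ (P.equivFin.symm i).2])
        have : P.equivFin.symm i = ⟨e, heP⟩ := Subtype.ext this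
        rw [← this]; simp
      · intro h
        rw [h]; simp
    rw [this, Finset.card_singleton]
    exact odd_one

lemma oddCover_min (s k : ℕ) :
    ∃ H : Fin (oddCoverNumber s k) → Fin s → Finset (Fin k), IsOddCoverOn Finset.univ H := by
  have h : {m | ∃ H : Fin m → Fin s → Finset (Fin k), IsOddCoverOn Finset.univ H}.Nonempty := by
    obtain ⟨m, H, hH⟩ := exists_oddCover s k
    exact ⟨m, H, hH⟩
  exact Nat.sInf_mem h

lemma piece_base {n k s : ℕ} (f : Fin k → Fin n) (hf : Function.Injective f)
    (S : Finset (Fin n)) (hS : S ⊆ Finset.univ.image f) :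
    ∃ H : Fin (oddCoverNumber s k) → Fin s → Finset (Fin n),
      (∀ i j, H i j ⊆ S) ∧ Fits H (fun e => e ⊆ S) := by
  classical
  obtain ⟨H0, hsub0, hdisj0, hcov0⟩ := oddCover_min s k
  have hd : ∀ i, Pairwise (Function.onFun Disjoint (fun j => (H0 i j).image f ∩ S)) := by
    intro i j j' hjj'
    refine Finset.disjoint_left.2 fun x hx hx' => ?_
    simp only [Finset.mem_inter, Finset.mem_image] at hx hx'
    obtain ⟨⟨y, hy, hyx⟩, _⟩ := hx
    obtain ⟨⟨y', hy', hyx'⟩, _⟩ := hx'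
    have : y = y' := hf (hyx.trans hyx'.symm)
    subst this
    exact Finset.disjoint_left.1 (hdisj0 i hjj') hy hy'
  refine ⟨fun i j => (H0 i j).image f ∩ S, fun i j => Finset.inter_subset_right, hd, ?_⟩
  intro e he
  by_cases heS : e ⊆ S
  case pos =>
      set e0 := Finset.univ.filter (fun y => f y ∈ e) with he0
      have him : e0.image f = e := by
        ext x
        simp only [Finset.mem_image, he0, Finset.mem_filter, Finset.mem_univ, true_and]
        constructor
        · rintro ⟨y, hy, rfl⟩; exact hy
        · intro hx
          obtain ⟨y, _, rfl⟩ := Finset.mem_image.1 (hS (heS hx))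
          exact ⟨y, hx, rfl⟩
      have hc0 : e0.card = s := by
        rw [← he, ← him, Finset.card_image_of_injective _ hf]
      have hiff : ∀ i, IsEdge (fun j => (H0 i j).image f ∩ S) e ↔ IsEdge (H0 i) e0 := by
        intro i
        have key : ∀ j, e ∩ ((H0 i j).image f ∩ S) = (e0 ∩ H0 i j).image f := by
          intro j
          rw [Finset.image_inter _ _ hf, him]
          rw [Finset.inter_comm ((H0 i j).image f) S, ← Finset.inter_assoc,
            Finset.inter_eq_left.2 heS]
        constructor
        · intro h j
          have := h j
          rw [key j, Finset.card_image_of_injective _ hf] at this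
          exact this
        · intro h j
          rw [key j, Finset.card_image_of_injective _ hf]
          exact h j
      have : cnt (fun i j => (H0 i j).image f ∩ S) e
          = (Finset.univ.filter fun i => IsEdge (H0 i) e0).card := by
        unfold cnt
        congr 1
        exact Finset.filter_congr fun i _ => by rw [hiff i]
      rw [this]
      simpa [heS] using hcov0 e0 (Finset.subset_univ _) hc0
  case neg =>
      have : cnt (fun i j => (H0 i j).image f ∩ S) e = 0 := by
        rw [cnt, Finset.card_eq_zero, Finset.filter_eq_empty_iff]
        intro i _ hedge
        exact heS (edge_subset (hd i) hedge he (fun j => Finset.inter_subset_right))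
      simp [this, heS]

lemma isEdge_inter {t : ℕ} {P : Fin t → Finset α} {S : Finset α} (h : ∀ j, P j ⊆ S)
    (e : Finset α) : IsEdge P e ↔ IsEdge P (e ∩ S) := by
  have key : ∀ j, (e ∩ S) ∩ P j = e ∩ P j := by
    intro j
    rw [Finset.inter_assoc, Finset.inter_eq_right.2 (h j)]
  constructor
  · intro hE j; rw [key j]; exact hE j
  · intro hE j; rw [← key j]; exact hE j

lemma piece_ext {s m : ℕ} {H : Fin m → Fin s → Finset α} {S T : Finset α}
    (hsub : ∀ i j, H i j ⊆ S) (hfits : Fits H (fun e => e ⊆ S)) (hST : Disjoint S T) :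
    ∃ H' : Fin m → Fin (s + 1) → Finset α, (∀ i j, H' i j ⊆ S ∪ T) ∧
      Fits H' (fun e => (e ∩ T).card = 1 ∧ e \ T ⊆ S) := by
  classical
  obtain ⟨hd, hodd⟩ := hfits
  refine ⟨fun i => Fin.snoc (H i) T, ?_, ?_, ?_⟩
  · intro i j
    rcases Fin.eq_castSucc_or_eq_last j with ⟨j0, rfl⟩ | rfl
    · simp only [Fin.snoc_castSucc]
      exact (hsub i j0).trans Finset.subset_union_left
    · simp only [Fin.snoc_last]
      exact Finset.subset_union_right
  · intro i j j' hjj'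
    rcases Fin.eq_castSucc_or_eq_last j with ⟨j0, rfl⟩ | rfl <;>
      rcases Fin.eq_castSucc_or_eq_last j' with ⟨j0', rfl⟩ | rfl
    · have : j0 ≠ j0' := fun h => hjj' (by rw [h])
      simpa only [Function.onFun, Fin.snoc_castSucc] using hd i this
    · simp only [Function.onFun, Fin.snoc_castSucc, Fin.snoc_last]
      exact Finset.disjoint_of_subset_left (hsub i j0) hST
    · simp only [Function.onFun, Fin.snoc_castSucc, Fin.snoc_last]
      exact Finset.disjoint_of_subset_right (hsub i j0') hST.symm
    · exact absurd rfl hjj'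
  · intro e he
    have hedge : ∀ i, IsEdge (Fin.snoc (H i) T) e ↔ ((e ∩ T).card = 1 ∧ IsEdge (H i) (e \ T)) := by
      intro i
      have hkey : ∀ j, e ∩ H i j = (e \ T) ∩ H i j := by
        intro j
        ext x
        simp only [Finset.mem_inter, Finset.mem_sdiff]
        constructor
        · intro ⟨hx, hxP⟩
          exact ⟨⟨hx, fun hxT => Finset.disjoint_left.1 hST (hsub i j hxP) hxT⟩, hxP⟩
        · intro ⟨⟨hx, _⟩, hxP⟩; exact ⟨hx, hxP⟩
      constructor
      · intro h
        have hT : (e ∩ T).card = 1 := by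
          have := h (Fin.last s); rwa [Fin.snoc_last] at this
        refine ⟨hT, fun j => ?_⟩
        have := h j.castSucc
        rwa [Fin.snoc_castSucc, hkey j] at this
      · intro ⟨hT, h⟩ j
        rcases Fin.eq_castSucc_or_eq_last j with ⟨j0, rfl⟩ | rfl
        · rw [Fin.snoc_castSucc, hkey j0]; exact h j0
        · rwa [Fin.snoc_last]
    by_cases hT : (e ∩ T).card = 1
    · have hcnt : cnt (fun i => Fin.snoc (H i) T) e = cnt H (e \ T) := by
        unfold cnt
        congr 1
        refine Finset.filter_congr fun i _ => ?_
        rw [hedge i]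
        simp [hT]
      have hcard : (e \ T).card = s := by
        have h1 : (e \ T).card + (e ∩ T).card = e.card := Finset.card_sdiff_add_card_inter e T
        omega
      rw [hcnt, hodd _ hcard]
      simp [hT]
    · have hcnt : cnt (fun i => Fin.snoc (H i) T) e = 0 := by
        rw [cnt, Finset.card_eq_zero, Finset.filter_eq_empty_iff]
        intro i _ h
        exact hT ((hedge i).1 h).1
      simp [hcnt, hT]

lemma isEdge_append {t u : ℕ} (P : Fin t → Finset α) (Q : Fin u → Finset α) (e : Finset α) :
    IsEdge (Fin.append P Q) e ↔ IsEdge P e ∧ IsEdge Q e := by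
  constructor
  · intro h
    refine ⟨fun j => ?_, fun j => ?_⟩
    · have := h (Fin.castAdd u j); rwa [Fin.append_left] at this
    · have := h (Fin.natAdd t j); rwa [Fin.append_right] at this
  · intro ⟨h1, h2⟩ j
    induction j using Fin.addCases with
    | left j => rw [Fin.append_left]; exact h1 j
    | right j => rw [Fin.append_right]; exact h2 j

lemma piece_prod {t u m1 m2 : ℕ} {H1 : Fin m1 → Fin t → Finset α}
    {H2 : Fin m2 → Fin u → Finset α} {S T : Finset α}
    (hsub1 : ∀ i j, H1 i j ⊆ S) (hf1 : Fits H1 (fun e => e ⊆ S))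
    (hsub2 : ∀ i j, H2 i j ⊆ T) (hf2 : Fits H2 (fun e => e ⊆ T)) (hST : Disjoint S T) :
    ∃ K : Fin (m1 * m2) → Fin (t + u) → Finset α, (∀ i j, K i j ⊆ S ∪ T) ∧
      Fits K (fun e => (e ∩ S).card = t ∧ e \ S ⊆ T) := by
  classical
  obtain ⟨hd1, hodd1⟩ := hf1
  obtain ⟨hd2, hodd2⟩ := hf2
  set π := (finProdFinEquiv (m := m1) (n := m2)).symm with hπ
  refine ⟨fun i => Fin.append (H1 (π i).1) (H2 (π i).2), ?_, ?_, ?_⟩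
  · intro i j
    induction j using Fin.addCases with
    | left j =>
      simp only [Fin.append_left]
      exact (hsub1 _ j).trans Finset.subset_union_left
    | right j =>
      simp only [Fin.append_right]
      exact (hsub2 _ j).trans Finset.subset_union_right
  · intro i j j' hjj'
    simp only [Function.onFun]
    induction j using Fin.addCases with
    | left j =>
      induction j' using Fin.addCases with
      | left j' =>
        rw [Fin.append_left, Fin.append_left]
        exact hd1 _ (fun h => hjj' (by rw [h]))
      | right j' =>
        rw [Fin.append_left, Fin.append_right]
        exact Finset.disjoint_of_subset_left (hsub1 _ _)
          (Finset.disjoint_of_subset_right (hsub2 _ _) hST)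
    | right j =>
      induction j' using Fin.addCases with
      | left j' =>
        rw [Fin.append_right, Fin.append_left]
        exact Finset.disjoint_of_subset_left (hsub2 _ _)
          (Finset.disjoint_of_subset_right (hsub1 _ _) hST.symm)
      | right j' =>
        rw [Fin.append_right, Fin.append_right]
        exact hd2 _ (fun h => hjj' (by rw [h]))
  · intro e he
    have hcnt : cnt (fun i => Fin.append (H1 (π i).1) (H2 (π i).2)) e
        = cnt H1 (e ∩ S) * cnt H2 (e ∩ T) := by
      unfold cnt
      have h1 : (Finset.univ.filter fun i : Fin (m1 * m2) =>
          IsEdge (Fin.append (H1 (π i).1) (H2 (π i).2)) e).card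
          = (Finset.univ.filter fun p : Fin m1 × Fin m2 =>
            IsEdge (H1 p.1) (e ∩ S) ∧ IsEdge (H2 p.2) (e ∩ T)).card := by
        apply Finset.card_bij (fun i _ => π i)
        · intro i hi
          simp only [Finset.mem_filter, Finset.mem_univ, true_and] at hi ⊢
          rw [isEdge_append] at hi
          exact ⟨(isEdge_inter (hsub1 _) e).1 hi.1, (isEdge_inter (hsub2 _) e).1 hi.2⟩
        · intro i _ i' _ h
          exact π.injective h
        · intro p hp
          refine ⟨π.symm p, ?_, by simp⟩
          simp only [Finset.mem_filter, Finset.mem_univ, true_and] at hp ⊢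
          rw [isEdge_append]
          simp only [Equiv.apply_symm_apply]
          exact ⟨(isEdge_inter (hsub1 _) e).2 hp.1, (isEdge_inter (hsub2 _) e).2 hp.2⟩
      have h2 : (Finset.univ.filter fun p : Fin m1 × Fin m2 =>
          IsEdge (H1 p.1) (e ∩ S) ∧ IsEdge (H2 p.2) (e ∩ T))
          = (Finset.univ.filter fun i => IsEdge (H1 i) (e ∩ S)) ×ˢ
            (Finset.univ.filter fun i => IsEdge (H2 i) (e ∩ T)) := by
        ext ⟨a, b⟩
        simp [Finset.mem_product]
      rw [h1, h2, Finset.card_product]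
    rw [hcnt, Nat.odd_mul]
    have hdisj : Disjoint (e ∩ S) (e ∩ T) :=
      Finset.disjoint_of_subset_left Finset.inter_subset_right
        (Finset.disjoint_of_subset_right Finset.inter_subset_right hST)
    have hsumle : (e ∩ S).card + (e ∩ T).card ≤ e.card := by
      rw [← Finset.card_union_of_disjoint hdisj]
      exact Finset.card_le_card (Finset.union_subset Finset.inter_subset_left
        Finset.inter_subset_left)
    have hTsub : e ∩ T ⊆ e \ S := by
      intro x hx
      simp only [Finset.mem_inter] at hx
      simp only [Finset.mem_sdiff]
      exact ⟨hx.1, fun hxS => Finset.disjoint_left.1 hST hxS hx.2⟩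
    have hzero1 : (e ∩ S).card < t → cnt H1 (e ∩ S) = 0 := by
      intro hlt
      rw [cnt, Finset.card_eq_zero, Finset.filter_eq_empty_iff]
      intro i _ hE
      exact absurd (edge_card_le (hd1 i) hE) (by omega)
    have hzero2 : (e ∩ T).card < u → cnt H2 (e ∩ T) = 0 := by
      intro hlt
      rw [cnt, Finset.card_eq_zero, Finset.filter_eq_empty_iff]
      intro i _ hE
      exact absurd (edge_card_le (hd2 i) hE) (by omega)
    have hsdcard : (e \ S).card = e.card - (e ∩ S).card := by
      have := Finset.card_sdiff_add_card_inter e S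
      omega
    rcases lt_trichotomy (e ∩ S).card t with hlt | heq | hgt
    · simp only [hzero1 hlt]
      simp only [Nat.odd_iff]
      omega
    · have hc1 : Odd (cnt H1 (e ∩ S)) := (hodd1 _ heq).2 Finset.inter_subset_right
      rcases eq_or_lt_of_le (show (e ∩ T).card ≤ u by omega) with heq2 | hlt2
      · have hc2 : Odd (cnt H2 (e ∩ T)) := (hodd2 _ heq2).2 Finset.inter_subset_right
        have hTeq : e \ S = e ∩ T :=
          (Finset.eq_of_subset_of_card_le hTsub (by omega)).symm
        simp only [hc1, hc2, heq, true_and, true_iff]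
        rw [hTeq]
        exact Finset.inter_subset_right
      · have : cnt H2 (e ∩ T) = 0 := hzero2 hlt2
        simp only [this]
        have hns : ¬ (e \ S ⊆ T) := by
          intro hsub
          have : e \ S ⊆ e ∩ T := fun x hx =>
            Finset.mem_inter.2 ⟨(Finset.mem_sdiff.1 hx).1, hsub hx⟩
          have := Finset.card_le_card this
          omega
        simp [hns, Nat.odd_iff]
    · have : (e ∩ T).card < u := by omega
      simp only [hzero2 this]
      simp only [Nat.odd_iff]
      omega

lemma fits_congr {r m : ℕ} {H : Fin m → Fin r → Finset α} {C C' : Finset α → Prop}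
    (hf : Fits H C) (h : ∀ e : Finset α, e.card = r → (C e ↔ C' e)) : Fits H C' :=
  ⟨hf.1, fun e he => (hf.2 e he).trans (h e he)⟩

lemma fits_cast {r r' m : ℕ} (h : r = r') {H : Fin m → Fin r → Finset α} {C : Finset α → Prop}
    (hf : Fits H C) : Fits (fun i j => H i (Fin.cast h.symm j)) C := by
  subst h; exact hf

lemma glue {r : ℕ} (s : Finset ℕ) (msize : ℕ → ℕ) (C : ℕ → Finset α → Prop)
    (hdisj : ∀ i ∈ s, ∀ j ∈ s, i ≠ j → ∀ e, ¬(C i e ∧ C j e))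
    (h : ∀ i ∈ s, ∃ H : Fin (msize i) → Fin r → Finset α, Fits H (C i)) :
    ∃ H : Fin (∑ i ∈ s, msize i) → Fin r → Finset α, Fits H (fun e => ∃ i ∈ s, C i e) := by
  classical
  induction s using Finset.cons_induction with
  | empty =>
    refine ⟨fun _ _ => ∅, fun i j j' _ => Finset.disjoint_empty_left _, ?_⟩
    intro e he
    have h0 : cnt (fun (_ : Fin (∑ i ∈ (∅ : Finset ℕ), msize i)) (_ : Fin r) => (∅ : Finset α)) e = 0 := by
      refine Nat.le_zero.1 (le_trans (Finset.card_filter_le _ _) ?_)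
      simp
      exact Finset.univ_eq_empty_iff.2 ⟨fun x => absurd x.isLt (by simp)⟩
    rw [show (Odd (cnt (fun _ _ => ∅) e) ↔ (fun e => ∃ i ∈ (∅ : Finset ℕ), C i e) e)
      ↔ (Odd (cnt (fun (_ : Fin (∑ i ∈ (∅ : Finset ℕ), msize i)) (_ : Fin r) => (∅ : Finset α)) e)
        ↔ ∃ i ∈ (∅ : Finset ℕ), C i e) from Iff.rfl, h0]
    simp
  | cons a s ha ih =>
    obtain ⟨H1, hf1⟩ := h a (Finset.mem_cons_self a s)
    obtain ⟨H2, hf2⟩ := ih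
      (fun i hi j hj hij => hdisj i (Finset.mem_cons.2 (Or.inr hi)) j (Finset.mem_cons.2 (Or.inr hj)) hij)
      (fun i hi => h i (Finset.mem_cons.2 (Or.inr hi)))
    rw [Finset.sum_cons]
    refine ⟨Fin.append H1 H2, ?_, ?_⟩
    · intro i
      induction i using Fin.addCases with
      | left i => simpa only [Fin.append_left] using hf1.1 i
      | right i => simpa only [Fin.append_right] using hf2.1 i
    · intro e he
      have hsplit : (∃ i ∈ Finset.cons a s ha, C i e) ↔ (C a e ∨ ∃ i ∈ s, C i e) := by
        simp only [Finset.mem_cons]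
        constructor
        · rintro ⟨i, hi | hi, hC⟩
          · exact Or.inl (hi ▸ hC)
          · exact Or.inr ⟨i, hi, hC⟩
        · rintro (hC | ⟨i, hi, hC⟩)
          · exact ⟨a, Or.inl rfl, hC⟩
          · exact ⟨i, Or.inr hi, hC⟩
      show Odd (cnt (Fin.append H1 H2) e) ↔ ∃ i ∈ Finset.cons a s ha, C i e
      rw [cnt_append, hsplit]
      by_cases hCa : C a e
      · have hc1 : Odd (cnt H1 e) := (hf1.2 e he).2 hCa
        have hns : ¬∃ i ∈ s, C i e := by
          rintro ⟨i, hi, hCi⟩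
          have hia : a ≠ i := fun hh => ha (hh ▸ hi)
          exact hdisj a (Finset.mem_cons_self a s) i (Finset.mem_cons.2 (Or.inr hi)) hia e ⟨hCa, hCi⟩
        have hc2 : ¬Odd (cnt H2 e) := fun hodd => hns ((hf2.2 e he).1 hodd)
        rw [Nat.odd_iff] at hc1 hc2 ⊢
        simp only [hCa, true_or, iff_true]
        omega
      · have hc1 : ¬Odd (cnt H1 e) := fun hodd => hCa ((hf1.2 e he).1 hodd)
        rw [Nat.odd_iff] at hc1
        rw [Nat.odd_iff] at *
        rw [show ((cnt H1 e + cnt H2 e) % 2 = 1) ↔ (cnt H2 e % 2 = 1) by omega]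
        rw [← Nat.odd_iff, hf2.2 e he]
        simp [hCa]

lemma fits_of_eq {r m m' : ℕ} (h : m = m') {H : Fin m → Fin r → Finset α} {C : Finset α → Prop}
    (hf : Fits H C) : ∃ H' : Fin m' → Fin r → Finset α, Fits H' C := by
  subst h; exact ⟨H, hf⟩

lemma oddCoverNumber_zero_le (n : ℕ) : oddCoverNumber 0 n ≤ 1 := by
  apply Nat.sInf_le
  refine ⟨fun _ => Fin.elim0, fun i j => j.elim0, fun i j => j.elim0, ?_⟩
  intro e _ _
  have : (Finset.univ.filter fun i : Fin 1 => IsEdge (Fin.elim0 : Fin 0 → Finset (Fin n)) e)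
      = Finset.univ := Finset.filter_true_of_mem (fun i _ j => j.elim0)
  rw [this]
  simp

lemma one_le_oddCoverNumber_zero (k : ℕ) : 1 ≤ oddCoverNumber 0 k := by
  by_contra h
  push_neg at h
  interval_cases h' : oddCoverNumber 0 k
  obtain ⟨H, _, _, hcov⟩ := oddCover_min 0 k
  have := hcov ∅ (Finset.empty_subset _) rfl
  have h0 : (Finset.univ.filter fun i : Fin (oddCoverNumber 0 k) => IsEdge (H i) ∅).card = 0 := by
    refine Nat.le_zero.1 (le_trans (Finset.card_filter_le _ _) ?_)
    simp [h']
  rw [h0] at this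
  simp at this

/-- For even `r`,
`b_r(n) ≤ 2·b_r(⌈n/2⌉) + 2·b_{r-1}(⌈n/2⌉) + Σ_{t=2}^{r-2} b_t(⌈n/2⌉)·b_{r-t}(⌈n/2⌉)`. -/
theorem stmt19 (r n : ℕ) (hr : Even r) :
    oddCoverNumber r n ≤
      2 * oddCoverNumber r ((n + 1) / 2) + 2 * oddCoverNumber (r - 1) ((n + 1) / 2) +
        ∑ t ∈ Finset.Icc 2 (r - 2),
          oddCoverNumber t ((n + 1) / 2) * oddCoverNumber (r - t) ((n + 1) / 2) := by
  classical
  set k := (n + 1) / 2 with hk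
  rcases Nat.eq_zero_or_pos r with rfl | hrpos
  · have h1 : oddCoverNumber 0 n ≤ 1 := oddCoverNumber_zero_le n
    have h2 : 1 ≤ oddCoverNumber 0 k := one_le_oddCoverNumber_zero k
    simp only [Nat.zero_sub]
    omega
  have hr2 : 2 ≤ r := by
    obtain ⟨c, rfl⟩ := hr; omega
  have hkn : k ≤ n := by omega
  have hn2k : n ≤ 2 * k := by omega
  set A : Finset (Fin n) := Finset.univ.filter (fun v => v.val < k) with hA
  set B : Finset (Fin n) := Finset.univ.filter (fun v => k ≤ v.val) with hB
  have hmemA : ∀ v : Fin n, v ∈ A ↔ v.val < k := by intro v; simp [hA]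
  have hmemB : ∀ v : Fin n, v ∈ B ↔ k ≤ v.val := by intro v; simp [hB]
  have hAB : Disjoint A B := by
    refine Finset.disjoint_left.2 fun v hvA hvB => ?_
    rw [hmemA] at hvA; rw [hmemB] at hvB; omega
  have hsdA : ∀ e : Finset (Fin n), e \ A = e ∩ B := by
    intro e; ext v
    simp only [Finset.mem_sdiff, Finset.mem_inter, hmemA, hmemB]
    constructor <;> rintro ⟨h1, h2⟩ <;> exact ⟨h1, by omega⟩
  have hsdB : ∀ e : Finset (Fin n), e \ B = e ∩ A := by
    intro e; ext v
    simp only [Finset.mem_sdiff, Finset.mem_inter, hmemA, hmemB]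
    constructor <;> rintro ⟨h1, h2⟩ <;> exact ⟨h1, by omega⟩
  have hABcard : ∀ e : Finset (Fin n), (e ∩ A).card + (e ∩ B).card = e.card := by
    intro e
    rw [← hsdB e]
    exact Finset.card_sdiff_add_card_inter e B
  -- embeddings
  have hfA : ∃ fA : Fin k → Fin n, Function.Injective fA ∧ A ⊆ Finset.univ.image fA := by
    refine ⟨fun i => ⟨i.val, by have := i.isLt; omega⟩, fun i i' h => Fin.ext (by
      simpa using congrArg Fin.val h), fun v hv => ?_⟩
    rw [hmemA] at hv
    exact Finset.mem_image.2 ⟨⟨v.val, hv⟩, Finset.mem_univ _, Fin.ext rfl⟩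
  have hfB : ∃ fB : Fin k → Fin n, Function.Injective fB ∧ B ⊆ Finset.univ.image fB := by
    refine ⟨fun i => ⟨n - 1 - i.val, by have := i.isLt; omega⟩, fun i i' h => Fin.ext (by
      have h1 := i.isLt; have h2 := i'.isLt
      have := congrArg Fin.val h
      simp only at this
      omega), fun v hv => ?_⟩
    rw [hmemB] at hv
    have hvn := v.isLt
    refine Finset.mem_image.2 ⟨⟨n - 1 - v.val, by omega⟩, Finset.mem_univ _, Fin.ext ?_⟩
    show n - 1 - (n - 1 - v.val) = v.val
    omega
  obtain ⟨fA, hfAinj, hSA⟩ := hfA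
  obtain ⟨fB, hfBinj, hSB⟩ := hfB
  set msize : ℕ → ℕ := fun t => if t = 0 ∨ t = r then oddCoverNumber r k
    else if t = 1 ∨ t = r - 1 then oddCoverNumber (r - 1) k
    else oddCoverNumber t k * oddCoverNumber (r - t) k with hmsize
  have main : ∀ t ∈ Finset.Icc 0 r,
      ∃ H : Fin (msize t) → Fin r → Finset (Fin n), Fits H (fun e => (e ∩ A).card = t) := by
    intro t ht
    rw [Finset.mem_Icc] at ht
    by_cases ht0 : t = 0
    · subst ht0
      obtain ⟨HB, hsubB, hfitsB⟩ := piece_base fB hfBinj B hSB (s := r)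
      refine fits_of_eq (by simp [hmsize]) (fits_congr hfitsB fun e he => ?_)
      rw [Finset.card_eq_zero]
      constructor
      · intro hsub
        refine Finset.eq_empty_of_forall_notMem fun v hv => ?_
        rw [Finset.mem_inter] at hv
        exact Finset.disjoint_left.1 hAB hv.2 (hsub hv.1)
      · intro hempty v hv
        rw [hmemB]
        by_contra hlt
        have : v ∈ e ∩ A := Finset.mem_inter.2 ⟨hv, (hmemA v).2 (by omega)⟩
        rw [hempty] at this
        exact absurd this (Finset.notMem_empty v)
    · by_cases htr : t = r
      · obtain ⟨HA, hsubA, hfitsA⟩ := piece_base fA hfAinj A hSA (s := r)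
        refine fits_of_eq (by simp [hmsize, htr]) (fits_congr hfitsA fun e he => ?_)
        rw [htr]
        constructor
        · intro hsub
          rw [Finset.inter_eq_left.2 hsub, he]
        · intro hcard
          rw [← Finset.inter_eq_left]
          exact Finset.eq_of_subset_of_card_le Finset.inter_subset_left (by omega)
      · by_cases htr1 : t = r - 1
        · subst htr1
          obtain ⟨HA, hsubA, hfitsA⟩ := piece_base fA hfAinj A hSA (s := r - 1)
          obtain ⟨H', hsub', hfits'⟩ := piece_ext hsubA hfitsA hAB
          have hcast := fits_cast (show r - 1 + 1 = r by omega) hfits'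
          have hms : msize (r - 1) = oddCoverNumber (r - 1) k := by
            have hc1 : ¬(r - 1 = 0 ∨ r - 1 = r) := by omega
            have hc2 : r - 1 = 1 ∨ r - 1 = r - 1 := Or.inr rfl
            simp only [hmsize, hc1, hc2, if_false, if_true, or_true, true_or]
          refine fits_of_eq hms.symm (fits_congr hcast fun e he => ?_)
          constructor
          · intro ⟨h1, _⟩
            have := hABcard e
            omega
          · intro h1
            have := hABcard e
            refine ⟨by omega, ?_⟩
            rw [hsdB e]
            exact Finset.inter_subset_right
        · by_cases ht1 : t = 1
          · subst ht1
            obtain ⟨HB, hsubB, hfitsB⟩ := piece_base fB hfBinj B hSB (s := r - 1)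
            obtain ⟨H', hsub', hfits'⟩ := piece_ext hsubB hfitsB hAB.symm
            have hcast := fits_cast (show r - 1 + 1 = r by omega) hfits'
            have hms : msize 1 = oddCoverNumber (r - 1) k := by
              have hc1 : ¬((1 : ℕ) = 0 ∨ 1 = r) := by omega
              have hc2 : (1 : ℕ) = 1 ∨ (1 : ℕ) = r - 1 := Or.inl rfl
              simp only [hmsize, hc1, hc2, if_false, if_true, or_true, true_or]
            refine fits_of_eq hms.symm (fits_congr hcast fun e he => ?_)
            constructor
            · intro ⟨h1, _⟩
              exact h1
            · intro h1
              refine ⟨h1, ?_⟩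
              rw [hsdA e]
              exact Finset.inter_subset_right
          · -- 2 ≤ t ≤ r - 2
            obtain ⟨HA, hsubA, hfitsA⟩ := piece_base fA hfAinj A hSA (s := t)
            obtain ⟨HB, hsubB, hfitsB⟩ := piece_base fB hfBinj B hSB (s := r - t)
            obtain ⟨K, hsubK, hfitsK⟩ := piece_prod hsubA hfitsA hsubB hfitsB hAB
            have hcast := fits_cast (show t + (r - t) = r by omega) hfitsK
            have hms : msize t = oddCoverNumber t k * oddCoverNumber (r - t) k := by
              have hc1 : ¬(t = 0 ∨ t = r) := by omega
              have hc2 : ¬(t = 1 ∨ t = r - 1) := by omega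
              simp only [hmsize, hc1, hc2, if_false]
            refine fits_of_eq hms.symm (fits_congr hcast fun e he => ?_)
            constructor
            · intro ⟨h1, _⟩
              exact h1
            · intro h1
              refine ⟨h1, ?_⟩
              rw [hsdA e]
              exact Finset.inter_subset_right
  obtain ⟨H, hfH⟩ := glue (Finset.Icc 0 r) msize (fun t e => (e ∩ A).card = t)
    (fun i _ j _ hij e hc => hij (hc.1 ▸ hc.2 ▸ rfl)) main
  have hcover : IsOddCoverOn Finset.univ H := by
    refine ⟨fun i j => Finset.subset_univ _, hfH.1, fun e _ he => ?_⟩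
    exact (hfH.2 e he).2 ⟨(e ∩ A).card, Finset.mem_Icc.2
      ⟨Nat.zero_le _, le_trans (Finset.card_le_card Finset.inter_subset_left) he.le⟩, rfl⟩
  have hle : oddCoverNumber r n ≤ ∑ t ∈ Finset.Icc 0 r, msize t := Nat.sInf_le ⟨H, hcover⟩
  refine le_trans hle ?_
  rcases eq_or_lt_of_le hr2 with hr2' | hr3
  · -- r = 2
    obtain rfl := hr2'.symm
    have hIcc : Finset.Icc 0 2 = {0, 1, 2} := rfl
    rw [hIcc]
    have h0 : msize 0 = oddCoverNumber 2 k := by simp [hmsize]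
    have h1 : msize 1 = oddCoverNumber 1 k := by simp [hmsize]
    have h2 : msize 2 = oddCoverNumber 2 k := by simp [hmsize]
    rw [Finset.sum_insert (by decide), Finset.sum_insert (by decide), Finset.sum_singleton]
    rw [h0, h1, h2]
    simp
    omega
  · -- r ≥ 3
    have hIcc : Finset.Icc 0 r = insert 0 (insert 1 (insert (r - 1) (insert r
        (Finset.Icc 2 (r - 2))))) := by
      ext x
      simp only [Finset.mem_Icc, Finset.mem_insert]
      omega
    rw [hIcc, Finset.sum_insert (by simp [Finset.mem_Icc]; omega),
      Finset.sum_insert (by simp [Finset.mem_Icc]; omega),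
      Finset.sum_insert (by simp [Finset.mem_Icc]; omega),
      Finset.sum_insert (by simp [Finset.mem_Icc]; omega)]
    have h0 : msize 0 = oddCoverNumber r k := by simp [hmsize]
    have h1 : msize 1 = oddCoverNumber (r - 1) k := by
      have hc1 : ¬((1 : ℕ) = 0 ∨ 1 = r) := by omega
      have hc2 : (1 : ℕ) = 1 ∨ (1 : ℕ) = r - 1 := Or.inl rfl
      simp only [hmsize, hc1, hc2, if_false, if_true, or_true, true_or]
    have hr1 : msize (r - 1) = oddCoverNumber (r - 1) k := by
      have hc1 : ¬(r - 1 = 0 ∨ r - 1 = r) := by omega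
      have hc2 : r - 1 = 1 ∨ r - 1 = r - 1 := Or.inr rfl
      simp only [hmsize, hc1, hc2, if_false, if_true, or_true, true_or]
    have hrr : msize r = oddCoverNumber r k := by simp [hmsize]
    have hsum : ∑ t ∈ Finset.Icc 2 (r - 2), msize t
        = ∑ t ∈ Finset.Icc 2 (r - 2), oddCoverNumber t k * oddCoverNumber (r - t) k := by
      refine Finset.sum_congr rfl fun t ht => ?_
      rw [Finset.mem_Icc] at ht
      have hc1 : ¬(t = 0 ∨ t = r) := by omega
      have hc2 : ¬(t = 1 ∨ t = r - 1) := by omega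
      simp only [hmsize, hc1, hc2, if_false]
    rw [h0, h1, hr1, hrr, hsum]
    omega
end
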